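/- For every real number w, the improper oscillatory integrals defining the complete Airy and Gairy functions converge: the limits lim_{Z → ∞} ∫₀^{Z} cos( −w z + z³/3 ) dz and lim_{Z → ∞} ∫₀^{Z} sin( −w z + z³/3 ) dz exist (and are finite). Hence the complete functions Ai(−w) and Gi(−w), defined as 1/π times these limits, are well defined, and the incomplete Airy and Gairy integrals Ai(−w, 0, Z), Gi(−w, 0, Z) converge to them as Z → ∞. -/

import Mathlib

/-!
On `[c, ∞)` with `c = |w| + 1` the phase `φ(z) = -w z + z³/3` has derivative `z² - w > 0`, so
`cos φ = (z² - w)⁻¹ · (sin ∘ φ)'`, and likewise `sin φ = (z² - w)⁻¹ · (-cos ∘ φ)'`. Integrating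
by parts, the boundary term `(z² - w)⁻¹ sin φ(z)` tends to `0`, and the remaining integrand is
bounded by the derivative of the decreasing function `(z² - w)⁻¹`, which is integrable on `(c, ∞)`.
-/

open Filter MeasureTheory intervalIntegral Set Topology

/-- Dirichlet's test for improper integrals. -/
theorem exists_tendsto_intervalIntegral_mul_deriv_of_bounded {A : Type*} [NormedRing A]
    [NormedAlgebra ℝ A] [CompleteSpace A] {u u' v v' : ℝ → A} {a C : ℝ}
    (hu : ∀ x ∈ Ici a, HasDerivAt u (u' x) x) (hv : ∀ x ∈ Ici a, HasDerivAt v (v' x) x)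
    (hu' : IntegrableOn u' (Ioi a)) (hv' : ∀ b ≥ a, IntervalIntegrable v' volume a b)
    (hu_lim : Tendsto u atTop (𝓝 0)) (hvC : ∀ x ∈ Ici a, ‖v x‖ ≤ C) :
    ∃ l, Tendsto (fun b => ∫ x in a..b, u x * v' x) atTop (𝓝 l) := by
  have hu'v : IntegrableOn (fun x => u' x * v x) (Ioi a) := by
    refine hu'.mul_bdd ?_ ((ae_restrict_iff' measurableSet_Ioi).2 <|
      ae_of_all _ fun x hx => hvC x (mem_Ici_of_Ioi hx))
    refine ContinuousOn.aestronglyMeasurable (fun x hx => ?_) measurableSet_Ioi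
    exact (hv x (mem_Ici_of_Ioi hx)).continuousAt.continuousWithinAt
  have huv_lim : Tendsto (fun b => u b * v b) atTop (𝓝 0) :=
    hu_lim.zero_mul_isBoundedUnder_le <| isBoundedUnder_of_eventually_le (a := C) <|
      eventually_ge_atTop a |>.mono fun x hx => hvC x hx
  have hparts : ∀ b ≥ a, ∫ x in a..b, u x * v' x
      = u b * v b - u a * v a - ∫ x in a..b, u' x * v x := fun b hab => by
    have hIcc : ∀ x ∈ uIcc a b, x ∈ Ici a := fun x hx => (uIcc_of_le hab ▸ hx).1
    exact integral_mul_deriv_eq_deriv_mul (fun x hx => hu x (hIcc x hx))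
      (fun x hx => hv x (hIcc x hx))
      ((intervalIntegrable_iff_integrableOn_Ioc_of_le hab).2 (hu'.mono_set Ioc_subset_Ioi_self))
      (hv' b hab)
  refine ⟨0 - u a * v a - ∫ x in Ioi a, u' x * v x, ?_⟩
  refine ((huv_lim.sub_const _).sub
    (intervalIntegral_tendsto_integral_Ioi a hu'v tendsto_id)).congr' ?_
  filter_upwards [eventually_ge_atTop a] with b hab
  exact (hparts b hab).symm

theorem exists_tendsto_intervalIntegral_of_tail {E : Type*} [NormedAddCommGroup E]
    [NormedSpace ℝ E] {f : ℝ → E} (hf : LocallyIntegrable f) (a₀ : ℝ) {a : ℝ}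
    (h : ∃ l, Tendsto (fun b => ∫ x in a..b, f x) atTop (𝓝 l)) :
    ∃ l, Tendsto (fun b => ∫ x in a₀..b, f x) atTop (𝓝 l) := by
  obtain ⟨l, hl⟩ := h
  have hf' : ∀ b c : ℝ, IntervalIntegrable f volume b c := fun b c =>
    (hf.integrableOn_isCompact isCompact_uIcc).intervalIntegrable
  exact ⟨_, (hl.const_add (∫ x in a₀..a, f x)).congr fun b =>
    integral_add_adjacent_intervals (hf' a₀ a) (hf' a b)⟩

theorem hasDerivAt_cubic_phase (w z : ℝ) :
    HasDerivAt (fun z : ℝ => -w * z + z ^ 3 / 3) (z ^ 2 - w) z :=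
  (((hasDerivAt_id' z).const_mul (-w)).fun_add ((hasDerivAt_pow 3 z).div_const 3)).congr_deriv
    (by norm_num; ring)

theorem hasDerivAt_inv_sq_sub {w z : ℝ} (h : z ^ 2 - w ≠ 0) :
    HasDerivAt (fun z : ℝ => (z ^ 2 - w)⁻¹) (-(2 * z) / (z ^ 2 - w) ^ 2) z := by
  simpa using ((hasDerivAt_pow 2 z).sub_const w).fun_inv h

theorem tendsto_inv_sq_sub_atTop (w : ℝ) :
    Tendsto (fun z : ℝ => (z ^ 2 - w)⁻¹) atTop (𝓝 0) :=
  (tendsto_atTop_add_const_right _ (-w) (tendsto_pow_atTop two_ne_zero)).inv_tendsto_atTop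

theorem exists_tendsto_intervalIntegral_comp_cubic_phase {f g : ℝ → ℝ} {C : ℝ} (w : ℝ)
    (hfg : ∀ x, HasDerivAt f (g x) x) (hg : Continuous g) (hfC : ∀ x, |f x| ≤ C) :
    ∃ l, Tendsto (fun Z => ∫ z in (0 : ℝ)..Z, g (-w * z + z ^ 3 / 3)) atTop (𝓝 l) := by
  set c := |w| + 1
  have hphase_pos : ∀ z ∈ Ici c, 0 < z ^ 2 - w := fun z (hz : c ≤ z) => by
    nlinarith [le_abs_self w, abs_nonneg w]
  have hgφ : Continuous fun z => g (-w * z + z ^ 3 / 3) := hg.comp (by fun_prop)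
  refine exists_tendsto_intervalIntegral_of_tail hgφ.locallyIntegrable 0 (a := c) ?_
  have hu : ∀ z ∈ Ici c,
      HasDerivAt (fun z : ℝ => (z ^ 2 - w)⁻¹) (-(2 * z) / (z ^ 2 - w) ^ 2) z := fun z hz =>
    hasDerivAt_inv_sq_sub (hphase_pos z hz).ne'
  have hu' : IntegrableOn (fun z : ℝ => -(2 * z) / (z ^ 2 - w) ^ 2) (Ioi c) := by
    refine integrableOn_Ioi_deriv_of_nonpos' hu (fun z (hz : c < z) => ?_)
      (tendsto_inv_sq_sub_atTop w)
    have hz0 : 0 ≤ z := by linarith [abs_nonneg w]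
    exact div_nonpos_of_nonpos_of_nonneg (by linarith) (sq_nonneg _)
  have hv : ∀ z ∈ Ici c, HasDerivAt (fun z => f (-w * z + z ^ 3 / 3))
      ((z ^ 2 - w) * g (-w * z + z ^ 3 / 3)) z := fun z _ =>
    ((hfg _).comp z (hasDerivAt_cubic_phase w z)).congr_deriv (mul_comm _ _)
  have hv'_cont : Continuous fun z => (z ^ 2 - w) * g (-w * z + z ^ 3 / 3) := by fun_prop
  obtain ⟨l, hl⟩ := exists_tendsto_intervalIntegral_mul_deriv_of_bounded hu hv hu'
    (fun b _ => hv'_cont.intervalIntegrable c b)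
    (tendsto_inv_sq_sub_atTop w) (fun z _ => hfC _)
  refine ⟨l, hl.congr' ?_⟩
  filter_upwards [eventually_ge_atTop c] with b hcb
  refine integral_congr fun z hz => inv_mul_cancel_left₀ (hphase_pos z ?_).ne' _
  exact (uIcc_of_le hcb ▸ hz).1

/-- Convergence of the improper oscillatory integrals defining the complete
Airy and Gairy functions: for every real `w`, the limits
`lim_{Z→∞} ∫₀^Z cos(−wz + z³/3) dz` and `lim_{Z→∞} ∫₀^Z sin(−wz + z³/3) dz`
exist and are finite, so `Ai(−w)` and `Gi(−w)` are well defined and the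
incomplete Airy and Gairy integrals converge to them as `Z → ∞`. -/
theorem airy_gairy_integrals_converge (w : ℝ) :
    (∃ A : ℝ, Filter.Tendsto
        (fun Z : ℝ => ∫ z in (0 : ℝ)..Z, Real.cos (-w * z + z ^ 3 / 3))
        Filter.atTop (nhds A))
    ∧ (∃ G : ℝ, Filter.Tendsto
        (fun Z : ℝ => ∫ z in (0 : ℝ)..Z, Real.sin (-w * z + z ^ 3 / 3))
        Filter.atTop (nhds G)) :=
  ⟨exists_tendsto_intervalIntegral_comp_cubic_phase w Real.hasDerivAt_sin Real.continuous_cos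
      Real.abs_sin_le_one,
    exists_tendsto_intervalIntegral_comp_cubic_phase w
      (fun x => by simpa using (Real.hasDerivAt_cos x).neg) Real.continuous_sin
      (fun x => by simpa using Real.abs_cos_le_one x)⟩
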